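/- arXiv:2012.05639 — 2 statements merged into one kernel-verified Lean document; each statement's English description precedes it below -/
import Mathlib

section
/- Let n ≥ 1 and c ∈ Mat_n. Suppose p, q : ℂ → Mat_n are twice differentiable, p(z) and q(z) are invertible for every z, the system p''(z) = −(z/2) p(z) − 2 p(z) q(z) p(z), q''(z) = −(z/2) q(z) − 2 q(z) p(z) q(z) holds for all z, and the first integral q(z) p'(z) − q'(z) p(z) = c holds for all z. Define f(z) = p(z)⁻¹ p'(z) and h(z) = 2 q(z) p(z). Then f and h satisfy f'(z) = −f(z)² − (z/2)·I − h(z) and h'(z) = 2 h(z) f(z) − 2c for all z. -/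
attribute [local instance] Matrix.normedAddCommGroup Matrix.normedSpace

/-!
`f = p⁻¹ p'` is a matrix logarithmic derivative, so `f' = -f² + p⁻¹ p''`, and the equation for
`p''` turns this into the first identity. For the second, `(qp)' = q'p + qp'`; the first integral
replaces `q'p` by `qp' - c`, and `qp' = qp · f`.
-/

open Filter Topology

section MatrixDeriv

variable {𝕜 : Type*} [NontriviallyNormedField 𝕜] {m : Type*} [Fintype m] [DecidableEq m]
  {A B : 𝕜 → Matrix m m 𝕜} {A' B' : Matrix m m 𝕜} {x : 𝕜}

theorem HasDerivAt.matrix_mul [CompleteSpace 𝕜] (hA : HasDerivAt A A' x)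
    (hB : HasDerivAt B B' x) :
    HasDerivAt (fun y => A y * B y) (A' * B x + A x * B') x := by
  rw [add_comm]
  exact (LinearMap.mul 𝕜 (Matrix m m 𝕜)).toContinuousBilinearMap.hasDerivAt_of_bilinear
    (u := A) (v := B) (fun _ => hA) (fun _ => hB)

theorem HasDerivAt.matrix_inv (hA : HasDerivAt A A' x) (hAx : IsUnit (A x)) :
    HasDerivAt (fun y => (A y)⁻¹) (-((A x)⁻¹ * A' * (A x)⁻¹)) x := by
  have hdet : IsUnit (A x).det := (Matrix.isUnit_iff_isUnit_det _).mp hAx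
  have hcont : ContinuousAt A x := hA.continuousAt
  have hinv : ContinuousAt (fun y => (A y)⁻¹) x :=
    (continuousAt_matrix_inv _ <| by
      simpa [Ring.inverse_eq_inv'] using continuousAt_inv₀ hdet.ne_zero).comp hcont
  have hunits : ∀ᶠ y in 𝓝 x, IsUnit (A y).det :=
    ((continuous_id.matrix_det.continuousAt.comp hcont).eventually_ne hdet.ne_zero).mono
      fun y hy => isUnit_iff_ne_zero.mpr hy
  have hslope : Tendsto (slope A x) (𝓝[≠] x) (𝓝 A') := hasDerivAt_iff_tendsto_slope.mp hA
  refine hasDerivAt_iff_tendsto_slope.mpr <|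
    (((hinv.tendsto.mono_left nhdsWithin_le_nhds).mul hslope).mul tendsto_const_nhds).neg.congr' ?_
  filter_upwards [nhdsWithin_le_nhds hunits] with y hy
  -- `(A y)⁻¹ (A y - A x) (A x)⁻¹ = (A x)⁻¹ - (A y)⁻¹`
  rw [slope_def_module, slope_def_module, Matrix.mul_smul, Matrix.smul_mul, ← smul_neg, mul_sub,
    sub_mul, Matrix.nonsing_inv_mul _ hy, Matrix.mul_nonsing_inv_cancel_right _ _ hdet, one_mul,
    neg_sub]

theorem hasDerivAt_matrix_inv_mul_deriv [CompleteSpace 𝕜] (hA : DifferentiableAt 𝕜 A x)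
    (hA' : DifferentiableAt 𝕜 (deriv A) x) (hAx : IsUnit (A x)) :
    HasDerivAt (fun y => (A y)⁻¹ * deriv A y)
      (-((A x)⁻¹ * deriv A x) ^ 2 + (A x)⁻¹ * deriv (deriv A) x) x := by
  have hA₁ : HasDerivAt A (deriv A x) x := hA.hasDerivAt
  have hA₂ : HasDerivAt (deriv A) (deriv (deriv A) x) x := hA'.hasDerivAt
  convert (hA₁.matrix_inv hAx).matrix_mul hA₂ using 1
  noncomm_ring

end MatrixDeriv

theorem matrixNLS_fh_system_matrixC_general (n : ℕ)
    (c : Matrix (Fin n) (Fin n) ℂ)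
    (p q : ℂ → Matrix (Fin n) (Fin n) ℂ)
    (hp : Differentiable ℂ p) (hp' : Differentiable ℂ (deriv p))
    (hq : Differentiable ℂ q)
    (hpinv : ∀ z : ℂ, IsUnit (p z))
    (hpeq : ∀ z : ℂ, deriv (deriv p) z =
      -((z/2) • p z) - 2 * (p z * q z * p z))
    (hint : ∀ z : ℂ, q z * deriv p z - deriv q z * p z = c) :
    (∀ z : ℂ, deriv (fun w => (p w)⁻¹ * deriv p w) z =
      -((p z)⁻¹ * deriv p z) ^ 2 - (z/2) • (1 : Matrix (Fin n) (Fin n) ℂ)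
        - 2 * (q z * p z)) ∧
    (∀ z : ℂ, deriv (fun w => 2 * (q w * p w)) z =
      2 * ((2 * (q z * p z)) * ((p z)⁻¹ * deriv p z)) - 2 * c) := by
  have hdet (z : ℂ) : IsUnit (p z).det := (Matrix.isUnit_iff_isUnit_det _).mp (hpinv z)
  refine ⟨fun z => ?_, fun z => ?_⟩
  · refine (hasDerivAt_matrix_inv_mul_deriv (hp z) (hp' z) (hpinv z)).deriv.trans ?_
    rw [hpeq z, mul_sub, mul_neg, Matrix.mul_smul, Matrix.nonsing_inv_mul _ (hdet z), two_mul,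
      mul_add, Matrix.mul_assoc, Matrix.nonsing_inv_mul_cancel_left _ _ (hdet z), ← two_mul]
    abel
  · have hqp : HasDerivAt (fun w => q w * p w) (deriv q z * p z + q z * deriv p z) z :=
      (hq z).hasDerivAt.matrix_mul (hp z).hasDerivAt
    refine ((hasDerivAt_const z 2).matrix_mul hqp).deriv.trans ?_
    rw [← hint z, Matrix.mul_assoc, Matrix.mul_assoc,
      Matrix.mul_nonsing_inv_cancel_left _ _ (hdet z)]
    noncomm_ring

/-- for solutions of the reduced NLS system with `b = 0` and matrix
first integral `q p' − q' p = c`, the variables `f = p⁻¹ p'`, `h = 2qp` satisfy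
`f' = −f² − z/2 − h`, `h' = 2hf − 2c`. -/
theorem matrixNLS_fh_system_matrixC (n : ℕ) (hn : 1 ≤ n)
    (c : Matrix (Fin n) (Fin n) ℂ)
    (p q : ℂ → Matrix (Fin n) (Fin n) ℂ)
    (hp : Differentiable ℂ p) (hp' : Differentiable ℂ (deriv p))
    (hq : Differentiable ℂ q) (hq' : Differentiable ℂ (deriv q))
    (hpinv : ∀ z : ℂ, IsUnit (p z)) (hqinv : ∀ z : ℂ, IsUnit (q z))
    (hpeq : ∀ z : ℂ, deriv (deriv p) z =
      -((z/2) • p z) - 2 * (p z * q z * p z))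
    (hqeq : ∀ z : ℂ, deriv (deriv q) z =
      -((z/2) • q z) - 2 * (q z * p z * q z))
    (hint : ∀ z : ℂ, q z * deriv p z - deriv q z * p z = c) :
    (∀ z : ℂ, deriv (fun w => (p w)⁻¹ * deriv p w) z =
      -((p z)⁻¹ * deriv p z) ^ 2 - (z/2) • (1 : Matrix (Fin n) (Fin n) ℂ)
        - 2 * (q z * p z)) ∧
    (∀ z : ℂ, deriv (fun w => 2 * (q w * p w)) z =
      2 * ((2 * (q z * p z)) * ((p z)⁻¹ * deriv p z)) - 2 * c) :=
  matrixNLS_fh_system_matrixC_general n c p q hp hp' hq hpinv hpeq hint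
end

section
/- Let n ≥ 1, b ∈ Mat_n, and α ∈ ℂ. Suppose y : ℂ → Mat_n is twice differentiable and satisfies the matrix Painlevé II equation P₂⁰: y''(z) = 2 y(z)³ + z·y(z) + b·y(z) + y(z)·b + α·I for all z. For ζ ∈ ℂ with ζ ≠ 0 define the 2×2 block matrices (with n×n blocks) B(ζ,z) = [[ζ·I, y(z)], [y(z), −ζ·I]] and A(ζ,z) = −4ζ·B(ζ,z) + [[2 y(z)² + z·I + 2b, −2 y'(z) − (α/ζ)·I], [2 y'(z) − (α/ζ)·I, −2 y(z)² − z·I − 2b]]. Then for every ζ ≠ 0 and every z: ∂_z A(ζ,z) = ∂_ζ B(ζ,z) + B(ζ,z) A(ζ,z) − A(ζ,z) B(ζ,z), where ∂_ζ B = [[I, 0], [0, −I]]. -/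
/-!
Write `A = −4ζ B + C`. Then `[B, A] = [B, C]`, and a block computation of `[B, C]` shows that
`B_ζ + [B, C]` has diagonal blocks `±(2(y'y + yy') + I)`, which are the `z`-derivatives of
`±(2y² + zI + 2b)`, and off-diagonal blocks `−4ζy' ∓ 2(2y³ + zy + by + yb + αI)`, the constant
`2α` coming from `ζ · (α/ζ)`. By P₂⁰ the latter are `∂_z(−4ζy ∓ 2y')`.
-/

attribute [local instance] Matrix.normedAddCommGroup Matrix.normedSpace

/-- The matrix `B(ζ,z) = [[ζI, y(z)], [y(z), −ζI]]`. -/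
noncomputable def BlaxP20 (n : ℕ) (y : ℂ → Matrix (Fin n) (Fin n) ℂ) (ζ z : ℂ) :
    Matrix (Fin n ⊕ Fin n) (Fin n ⊕ Fin n) ℂ :=
  Matrix.fromBlocks (ζ • 1) (y z) (y z) (-(ζ • 1))

/-- The matrix `A(ζ,z) = −4ζ B + [[2y²+z+2b, −2y'−a/ζ], [2y'−a/ζ, −2y²−z−2b]]`. -/
noncomputable def AlaxP20 (n : ℕ) (b : Matrix (Fin n) (Fin n) ℂ) (α : ℂ)
    (y : ℂ → Matrix (Fin n) (Fin n) ℂ) (ζ z : ℂ) :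
    Matrix (Fin n ⊕ Fin n) (Fin n ⊕ Fin n) ℂ :=
  (-(4 * ζ)) • BlaxP20 n y ζ z +
    Matrix.fromBlocks
      (2 * (y z)^2 + z • 1 + 2 * b)
      (-(2 * deriv y z) - (α/ζ) • 1)
      (2 * deriv y z - (α/ζ) • 1)
      (-(2 * (y z)^2) - z • 1 - 2 * b)

open Matrix

section MatrixDeriv

variable {𝕜 : Type*} [NontriviallyNormedField 𝕜] {l m n o : Type*} {x : 𝕜}

theorem hasDerivAt_matrix [Fintype m] [Fintype n] {f : 𝕜 → Matrix m n 𝕜} {f' : Matrix m n 𝕜} :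
    HasDerivAt f f' x ↔ ∀ i j, HasDerivAt (fun w => f w i j) (f' i j) x :=
  hasDerivAt_pi.trans (forall_congr' fun _ => hasDerivAt_pi)

theorem HasDerivAt.matrix_mul_s14 [Fintype l] [Fintype m] [Fintype n]
    {f : 𝕜 → Matrix l m 𝕜} {g : 𝕜 → Matrix m n 𝕜} {f' : Matrix l m 𝕜} {g' : Matrix m n 𝕜}
    (hf : HasDerivAt f f' x) (hg : HasDerivAt g g' x) :
    HasDerivAt (fun w => f w * g w) (f' * g x + f x * g') x := by
  refine hasDerivAt_matrix.2 fun i j => ?_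
  simp only [mul_apply, Matrix.add_apply, ← Finset.sum_add_distrib]
  exact HasDerivAt.fun_sum (u := Finset.univ) fun k _ =>
    (hasDerivAt_matrix.1 hf i k).mul (hasDerivAt_matrix.1 hg k j)

theorem HasDerivAt.matrix_fromBlocks [Fintype l] [Fintype m] [Fintype n] [Fintype o]
    {f : 𝕜 → Matrix m o 𝕜} {g : 𝕜 → Matrix m l 𝕜} {h : 𝕜 → Matrix n o 𝕜}
    {k : 𝕜 → Matrix n l 𝕜} {f' : Matrix m o 𝕜} {g' : Matrix m l 𝕜} {h' : Matrix n o 𝕜}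
    {k' : Matrix n l 𝕜} (hf : HasDerivAt f f' x) (hg : HasDerivAt g g' x)
    (hh : HasDerivAt h h' x) (hk : HasDerivAt k k' x) :
    HasDerivAt (fun w => fromBlocks (f w) (g w) (h w) (k w)) (fromBlocks f' g' h' k') x := by
  refine hasDerivAt_matrix.2 ?_
  rintro (i | i) (j | j)
  · exact hasDerivAt_matrix.1 hf i j
  · exact hasDerivAt_matrix.1 hg i j
  · exact hasDerivAt_matrix.1 hh i j
  · exact hasDerivAt_matrix.1 hk i j

theorem hasDerivAt_smul_one [Fintype m] [DecidableEq m] :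
    HasDerivAt (fun w : 𝕜 => w • (1 : Matrix m m 𝕜)) 1 x :=
  ((hasDerivAt_id x).smul_const 1).congr_deriv (one_smul 𝕜 1)

end MatrixDeriv

theorem commutator_smul_self_add {S R : Type*} [Ring R] [SMul S R] [SMulCommClass S R R]
    [IsScalarTower S R R] (k : S) (B C : R) :
    B * (k • B + C) - (k • B + C) * B = B * C - C * B := by
  rw [mul_add, add_mul, mul_smul_comm, smul_mul_assoc, add_sub_add_left_eq_sub]

section LaxPair

variable {n : ℕ} (b : Matrix (Fin n) (Fin n) ℂ) (α : ℂ) (y : ℂ → Matrix (Fin n) (Fin n) ℂ)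

theorem hasDerivAt_BlaxP20_spectral (ζ z : ℂ) :
    HasDerivAt (fun w => BlaxP20 n y w z) (fromBlocks 1 0 0 (-1)) ζ := by
  exact hasDerivAt_smul_one.matrix_fromBlocks (hasDerivAt_const ζ (y z))
    (hasDerivAt_const ζ (y z)) hasDerivAt_smul_one.fun_neg

theorem hasDerivAt_AlaxP20 {ζ z : ℂ} (hy : DifferentiableAt ℂ y z)
    (hy' : DifferentiableAt ℂ (deriv y) z) :
    HasDerivAt (fun w => AlaxP20 n b α y ζ w)
      ((-(4 * ζ)) • fromBlocks 0 (deriv y z) (deriv y z) 0 +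
        fromBlocks (2 * (deriv y z * y z + y z * deriv y z) + 1) (-(2 * deriv (deriv y) z))
          (2 * deriv (deriv y) z) (-(2 * (deriv y z * y z + y z * deriv y z)) - 1)) z := by
  have hY := hy.hasDerivAt
  have hB : HasDerivAt (fun w => BlaxP20 n y ζ w) (fromBlocks 0 (deriv y z) (deriv y z) 0) z :=
    (hasDerivAt_const z _).matrix_fromBlocks hY hY (hasDerivAt_const z _)
  -- `rfl` identifies the rectangular product `HMul` of `Matrix` with the ring multiplication.
  have hsq : HasDerivAt (fun w => 2 * y w ^ 2) (2 * (deriv y z * y z + y z * deriv y z)) z := by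
    simp only [pow_two]
    exact ((hasDerivAt_const z (2 : Matrix (Fin n) (Fin n) ℂ)).matrix_mul_s14
      (hY.matrix_mul_s14 hY)).congr_deriv (by simp only [zero_mul, zero_add]; rfl)
  have hV : HasDerivAt (fun w => 2 * deriv y w) (2 * deriv (deriv y) z) z :=
    ((hasDerivAt_const z (2 : Matrix (Fin n) (Fin n) ℂ)).matrix_mul_s14
      hy'.hasDerivAt).congr_deriv (by simp only [zero_mul, zero_add]; rfl)
  exact (hB.fun_const_smul (-(4 * ζ))).fun_add <|
    ((hsq.fun_add hasDerivAt_smul_one).add_const (2 * b)).matrix_fromBlocks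
      (hV.fun_neg.sub_const ((α / ζ) • 1)) (hV.sub_const ((α / ζ) • 1))
      ((hsq.fun_neg.fun_sub hasDerivAt_smul_one).sub_const (2 * b))

theorem fromBlocks_add_commutator_BlaxP20_AlaxP20 {ζ : ℂ} (hζ : ζ ≠ 0) (z : ℂ) :
    fromBlocks 1 0 0 (-1) + BlaxP20 n y ζ z * AlaxP20 n b α y ζ z
        - AlaxP20 n b α y ζ z * BlaxP20 n y ζ z =
      (-(4 * ζ)) • fromBlocks 0 (deriv y z) (deriv y z) 0 +
        fromBlocks (2 * (deriv y z * y z + y z * deriv y z) + 1)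
          (-(2 * ((2 : ℂ) • y z ^ 3 + z • y z + b * y z + y z * b + α • 1)))
          (2 * ((2 : ℂ) • y z ^ 3 + z • y z + b * y z + y z * b + α • 1))
          (-(2 * (deriv y z * y z + y z * deriv y z)) - 1) := by
  rw [add_sub_assoc, AlaxP20, commutator_smul_self_add, BlaxP20]
  -- With `α = c ζ` every scalar coefficient is a polynomial in `c, ζ`, which `module` normalizes.
  obtain ⟨c, rfl⟩ : ∃ c, α = c * ζ := ⟨α / ζ, (div_mul_cancel₀ α hζ).symm⟩
  rw [mul_div_cancel_right₀ c hζ]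
  simp only [fromBlocks_smul, fromBlocks_multiply, fromBlocks_add, sub_eq_add_neg, fromBlocks_neg,
    fromBlocks_inj]
  refine ⟨?_, ?_, ?_, ?_⟩ <;>
  · simp only [two_mul, pow_succ, pow_zero, one_mul, mul_add, add_mul, neg_mul, mul_neg,
      smul_mul_assoc, mul_smul_comm, smul_add, smul_neg, Matrix.mul_one, mul_assoc, smul_zero]
    module

end LaxPair

theorem matrixP20_lax_pair_general (n : ℕ)
    (b : Matrix (Fin n) (Fin n) ℂ) (α : ℂ)
    (y : ℂ → Matrix (Fin n) (Fin n) ℂ)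
    (hy : Differentiable ℂ y) (hy' : Differentiable ℂ (deriv y))
    (heq : ∀ z : ℂ, deriv (deriv y) z =
      (2 : ℂ) • (y z) ^ 3 + z • y z + b * y z + y z * b
        + α • (1 : Matrix (Fin n) (Fin n) ℂ)) :
    ∀ ζ z : ℂ, ζ ≠ 0 →
      deriv (fun w => AlaxP20 n b α y ζ w) z =
        Matrix.fromBlocks 1 0 0 (-1)
          + BlaxP20 n y ζ z * AlaxP20 n b α y ζ z
          - AlaxP20 n b α y ζ z * BlaxP20 n y ζ z ∧
      deriv (fun w => BlaxP20 n y w z) ζ = Matrix.fromBlocks 1 0 0 (-1) := by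
  intro ζ z hζ
  refine ⟨?_, (hasDerivAt_BlaxP20_spectral y ζ z).deriv⟩
  rw [fromBlocks_add_commutator_BlaxP20_AlaxP20 b α y hζ z, ← heq z]
  exact (hasDerivAt_AlaxP20 b α y (hy z) (hy' z)).deriv

/-- isomonodromic Lax pair `A' = B_ζ + [B, A]` for the matrix
Painlevé II equation P₂⁰, with `B_ζ = [[I,0],[0,−I]]`. -/
theorem matrixP20_lax_pair (n : ℕ) (hn : 1 ≤ n)
    (b : Matrix (Fin n) (Fin n) ℂ) (α : ℂ)
    (y : ℂ → Matrix (Fin n) (Fin n) ℂ)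
    (hy : Differentiable ℂ y) (hy' : Differentiable ℂ (deriv y))
    (heq : ∀ z : ℂ, deriv (deriv y) z =
      (2 : ℂ) • (y z) ^ 3 + z • y z + b * y z + y z * b
        + α • (1 : Matrix (Fin n) (Fin n) ℂ)) :
    ∀ ζ z : ℂ, ζ ≠ 0 →
      deriv (fun w => AlaxP20 n b α y ζ w) z =
        Matrix.fromBlocks 1 0 0 (-1)
          + BlaxP20 n y ζ z * AlaxP20 n b α y ζ z
          - AlaxP20 n b α y ζ z * BlaxP20 n y ζ z ∧
      deriv (fun w => BlaxP20 n y w z) ζ = Matrix.fromBlocks 1 0 0 (-1) :=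
  matrixP20_lax_pair_general n b α y hy hy' heq
end
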